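/- arXiv:1110.5967 — 2 statements merged into one kernel-verified Lean document; each statement's English description precedes it below -/
import Mathlib

section
/- Let b ∈ (0,1), a ∈ (0,1), and t > 0. The Stein derivative of order b of the function x ↦ e^{−it|x|^{1+a}x} satisfies the pointwise bound 𝒟^b(e^{−it|x|^{1+a}x})(x) ≤ c (t^{b/(2+a)} + t^b |x|^{(1+a)b}) for all x ∈ ℝ, with a constant c depending only on a and b. -/
open MeasureTheory
open scoped NNReal ENNReal

/-- The Stein fractional derivative of order `b` on `ℝ`. -/
noncomputable def steinD (b : ℝ) (f : ℝ → ℂ) (x : ℝ) : ℝ :=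
  (∫ y : ℝ, ‖f x - f y‖ ^ 2 / |x - y| ^ (1 + 2 * b)) ^ (1 / 2 : ℝ)

/-!
Where `f` is unimodular and `L`-Lipschitz on the ball of radius `1 / L` around `x`, the integrand
of `(𝒟^b f x)²` is at most `L² |x - y|^(1 - 2b)` near `x` and `4 |x - y|^(-1 - 2b)` away from it;
both pieces integrate to multiples of `L^(2b)`, so `𝒟^b f x ≲ L^b`. Writing `t = l^(2+a)`, the phase
`t |y|^(1+a) y` is Lipschitz with constant `L ≈ t (|x| + 1/l)^(1+a) ≥ l` on the ball of radius
`1 / l ≥ 1 / L` around `x`, and `t^b (|x| + 1/l)^((1+a)b) ≲ t^(b/(2+a)) + t^b |x|^((1+a)b)`.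
-/

open Real Set

lemma Complex.norm_exp_I_mul_ofReal_sub_exp_I_mul_ofReal_le (r s : ℝ) :
    ‖Complex.exp (Complex.I * r) - Complex.exp (Complex.I * s)‖ ≤ |r - s| := by
  have h : Complex.exp (Complex.I * r) - Complex.exp (Complex.I * s)
      = Complex.exp (Complex.I * s) * (Complex.exp (Complex.I * ↑(r - s)) - 1) := by
    rw [mul_sub, ← Complex.exp_add]; push_cast; ring_nf
  rw [h, norm_mul, Complex.norm_exp_I_mul_ofReal, one_mul]
  exact Real.norm_exp_I_mul_ofReal_sub_one_le

lemma Real.add_rpow_le_two_rpow_mul_rpow_add_rpow {p u v : ℝ} (hu : 0 ≤ u) (hv : 0 ≤ v)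
    (hp : 0 ≤ p) : (u + v) ^ p ≤ 2 ^ p * (u ^ p + v ^ p) := calc
  (u + v) ^ p ≤ (2 * max u v) ^ p := by
    rw [two_mul]; gcongr <;> simp
  _ = 2 ^ p * max (u ^ p) (v ^ p) := by
    rw [mul_rpow zero_le_two (le_max_of_le_left hu), rpow_max hu hv hp]
  _ ≤ 2 ^ p * (u ^ p + v ^ p) := by
    gcongr; exact max_le_add_of_nonneg (by positivity) (by positivity)

lemma hasDerivAt_abs_rpow_mul_self {p : ℝ} (hp : 1 < p) (x : ℝ) :
    HasDerivAt (fun y : ℝ => |y| ^ p * y) ((p + 1) * |x| ^ p) x := by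
  refine ((hasDerivAt_abs_rpow x hp).mul (hasDerivAt_id' x)).congr_deriv ?_
  have hsq : |x| ^ (p - 2) * x * x = |x| ^ p := by
    rw [mul_assoc, ← abs_mul_abs_self, ← sq, ← rpow_two, ← rpow_add' (abs_nonneg x) (by linarith)]
    ring_nf
  linear_combination p * hsq

lemma abs_abs_rpow_mul_self_sub_le {p M x y : ℝ} (hp : 1 < p) (hx : |x| ≤ M) (hy : |y| ≤ M) :
    |(|x| ^ p * x) - |y| ^ p * y| ≤ (p + 1) * M ^ p * |x - y| := by
  have hderiv : ∀ z ∈ Icc (-M) M, ‖(p + 1) * |z| ^ p‖ ≤ (p + 1) * M ^ p := fun z hz => by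
    rw [norm_of_nonneg (by positivity)]
    gcongr
    exact abs_le.mpr hz
  simpa only [norm_eq_abs] using (convex_Icc (-M) M).norm_image_sub_le_of_norm_hasDerivWithin_le
    (fun z _ => (hasDerivAt_abs_rpow_mul_self hp z).hasDerivWithinAt) hderiv
    (abs_le.mp hy) (abs_le.mp hx)

lemma integrable_comp_abs_of_integrableOn_Ioi {f : ℝ → ℝ} (hf : IntegrableOn f (Ioi 0)) :
    Integrable fun x : ℝ => f |x| := by
  have hIoi : IntegrableOn (fun x => f |x|) (Ioi 0) :=
    hf.congr_fun (fun x hx => by rw [abs_of_pos hx]) measurableSet_Ioi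
  have hIio : IntegrableOn (fun x => f |x|) (Iio 0) := by
    have := (Measure.measurePreserving_neg (volume : Measure ℝ)).integrableOn_comp_preimage
      (Homeomorph.neg ℝ).measurableEmbedding |>.mpr hIoi
    simpa [Function.comp_def] using this
  rw [← integrableOn_univ, ← Iio_union_Ici]
  exact hIio.union (integrableOn_Ici_iff_integrableOn_Ioi (by simp) |>.mpr hIoi)

noncomputable def steinMajorant (b L δ r : ℝ) : ℝ :=
  if r ≤ δ then L ^ 2 * r ^ (1 - 2 * b) else 4 * r ^ (-(1 + 2 * b))

section SteinMajorant

variable {b L δ : ℝ}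

lemma steinMajorant_nonneg {r : ℝ} (hr : 0 ≤ r) : 0 ≤ steinMajorant b L δ r := by
  unfold steinMajorant; split_ifs <;> positivity

lemma div_rpow_le_steinMajorant {w r : ℝ} (hb : 0 < b) (hw : 0 ≤ w) (hr : 0 ≤ r) (hw2 : w ≤ 2)
    (hlip : r ≤ δ → w ≤ L * r) : w ^ 2 / r ^ (1 + 2 * b) ≤ steinMajorant b L δ r := by
  rcases hr.eq_or_lt with rfl | hr
  · rw [zero_rpow (by linarith), div_zero]
    exact steinMajorant_nonneg le_rfl
  unfold steinMajorant
  split_ifs with hrδ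
  · calc w ^ 2 / r ^ (1 + 2 * b) ≤ (L * r) ^ 2 / r ^ (1 + 2 * b) := by
          gcongr; exact hlip hrδ
      _ = L ^ 2 * r ^ (1 - 2 * b) := by
          rw [mul_pow, mul_div_assoc, ← rpow_two r, ← rpow_sub hr]; ring_nf
  · rw [rpow_neg hr.le, ← div_eq_mul_inv]
    gcongr
    nlinarith

lemma steinMajorant_eqOn_Ioc :
    EqOn (steinMajorant b L δ) (fun r => L ^ 2 * r ^ (1 - 2 * b)) (Ioc 0 δ) :=
  fun _ hr => if_pos hr.2

lemma steinMajorant_eqOn_Ioi :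
    EqOn (steinMajorant b L δ) (fun r => 4 * r ^ (-(1 + 2 * b))) (Ioi δ) :=
  fun _ hr => if_neg (not_le.mpr hr)

lemma integrableOn_Ioc_steinMajorant (hb : b < 1) :
    IntegrableOn (steinMajorant b L δ) (Ioc 0 δ) := by
  refine IntegrableOn.congr_fun ?_ steinMajorant_eqOn_Ioc.symm measurableSet_Ioc
  rcases le_or_gt δ 0 with hδ | hδ
  · simp [Ioc_eq_empty_of_le hδ]
  have := intervalIntegral.intervalIntegrable_rpow' (a := 0) (b := δ) (r := 1 - 2 * b)
    (by linarith)
  exact ((intervalIntegrable_iff_integrableOn_Ioc_of_le hδ.le).mp this).const_mul _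

lemma integrableOn_Ioi_steinMajorant (hb : 0 < b) (hδ : 0 < δ) :
    IntegrableOn (steinMajorant b L δ) (Ioi δ) :=
  IntegrableOn.congr_fun ((integrableOn_Ioi_rpow_of_lt (by linarith) hδ).const_mul 4)
    steinMajorant_eqOn_Ioi.symm measurableSet_Ioi

lemma integrableOn_steinMajorant (hb : b ∈ Ioo 0 1) (hδ : 0 < δ) :
    IntegrableOn (steinMajorant b L δ) (Ioi 0) := by
  rw [← Ioc_union_Ioi_eq_Ioi hδ.le]
  exact (integrableOn_Ioc_steinMajorant hb.2).union (integrableOn_Ioi_steinMajorant hb.1 hδ)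

lemma integral_steinMajorant (hb : b ∈ Ioo 0 1) (hδ : 0 < δ) :
    ∫ r in Ioi 0, steinMajorant b L δ r
      = L ^ 2 * δ ^ (2 - 2 * b) / (2 - 2 * b) + 4 * δ ^ (-(2 * b)) / (2 * b) := by
  obtain ⟨hb0, hb1⟩ := hb
  rw [← Ioc_union_Ioi_eq_Ioi hδ.le, setIntegral_union Ioc_disjoint_Ioi_same measurableSet_Ioi
    (integrableOn_Ioc_steinMajorant hb1) (integrableOn_Ioi_steinMajorant hb0 hδ),
    setIntegral_congr_fun measurableSet_Ioc steinMajorant_eqOn_Ioc,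
    setIntegral_congr_fun measurableSet_Ioi steinMajorant_eqOn_Ioi,
    ← intervalIntegral.integral_of_le hδ.le, intervalIntegral.integral_const_mul,
    integral_rpow (Or.inl (by linarith)), integral_const_mul,
    integral_Ioi_rpow_of_lt (by linarith) hδ, zero_rpow (by linarith)]
  congr 1
  · rw [show 1 - 2 * b + 1 = 2 - 2 * b by ring]; ring
  · rw [show -(1 + 2 * b) + 1 = -(2 * b) by ring]; field_simp

end SteinMajorant

lemma integral_steinD_integrand_le {b L δ : ℝ} (hb : b ∈ Ioo 0 1) (hδ : 0 < δ) {f : ℝ → ℂ}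
    {x : ℝ} (hbdd : ∀ y, ‖f x - f y‖ ≤ 2)
    (hlip : ∀ y, |x - y| ≤ δ → ‖f x - f y‖ ≤ L * |x - y|) :
    ∫ y, ‖f x - f y‖ ^ 2 / |x - y| ^ (1 + 2 * b)
      ≤ 2 * (L ^ 2 * δ ^ (2 - 2 * b) / (2 - 2 * b) + 4 * δ ^ (-(2 * b)) / (2 * b)) := by
  have hmaj : Integrable fun y => steinMajorant b L δ |x - y| :=
    (integrable_comp_sub_left (fun z => steinMajorant b L δ |z|) x).mpr
      (integrable_comp_abs_of_integrableOn_Ioi (integrableOn_steinMajorant hb hδ))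
  calc ∫ y, ‖f x - f y‖ ^ 2 / |x - y| ^ (1 + 2 * b)
      ≤ ∫ y, steinMajorant b L δ |x - y| :=
        integral_mono_of_nonneg (.of_forall fun y => by positivity) hmaj (.of_forall fun y =>
          div_rpow_le_steinMajorant hb.1 (norm_nonneg _) (abs_nonneg _) (hbdd y) (hlip y))
    _ = ∫ z, steinMajorant b L δ |z| :=
        integral_sub_left_eq_self (fun z => steinMajorant b L δ |z|) volume x
    _ = _ := by rw [integral_comp_abs, integral_steinMajorant hb hδ]

lemma steinD_le_of_lipschitz_near {b L : ℝ} (hb : b ∈ Ioo 0 1) (hL : 0 < L) {f : ℝ → ℂ}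
    {x : ℝ} (hbdd : ∀ y, ‖f x - f y‖ ≤ 2)
    (hlip : ∀ y, |x - y| ≤ L⁻¹ → ‖f x - f y‖ ≤ L * |x - y|) :
    steinD b f x ≤ √(1 / (1 - b) + 4 / b) * L ^ b := by
  obtain ⟨hb0, hb1⟩ := hb
  have hval : 2 * (L ^ 2 * L⁻¹ ^ (2 - 2 * b) / (2 - 2 * b) + 4 * L⁻¹ ^ (-(2 * b)) / (2 * b))
      = (1 / (1 - b) + 4 / b) * (L ^ b) ^ 2 := by
    have hinv (y : ℝ) : L⁻¹ ^ y = L ^ (-y) := by rw [inv_rpow hL.le, rpow_neg hL.le]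
    have hnear : L ^ 2 * L⁻¹ ^ (2 - 2 * b) = L ^ (2 * b) := by
      rw [hinv, ← rpow_natCast, ← rpow_add hL]; ring_nf
    have hsq : L ^ (2 * b) = (L ^ b) ^ 2 := by
      rw [← rpow_natCast, ← rpow_mul hL.le]; ring_nf
    have : (1:ℝ) - b ≠ 0 := by linarith
    rw [hnear, hinv, neg_neg, hsq]
    field_simp
  rw [steinD, ← sqrt_eq_rpow]
  calc √(∫ y, ‖f x - f y‖ ^ 2 / |x - y| ^ (1 + 2 * b))
      ≤ √((1 / (1 - b) + 4 / b) * (L ^ b) ^ 2) :=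
        sqrt_le_sqrt (hval ▸ integral_steinD_integrand_le ⟨hb0, hb1⟩ (inv_pos.mpr hL) hbdd hlip)
    _ = √(1 / (1 - b) + 4 / b) * L ^ b := by
        rw [sqrt_mul (by have := sub_pos.mpr hb1; positivity), sqrt_sq (by positivity)]

noncomputable def dispersiveSymbol (a t y : ℝ) : ℂ :=
  Complex.exp (-Complex.I * t * (|y| ^ (1 + a) : ℝ) * y)

lemma dispersiveSymbol_eq (a t y : ℝ) :
    dispersiveSymbol a t y = Complex.exp (Complex.I * ↑(-(t * (|y| ^ (1 + a) * y)))) := by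
  unfold dispersiveSymbol; congr 1; push_cast; ring

lemma norm_dispersiveSymbol_sub_le_two (a t x y : ℝ) :
    ‖dispersiveSymbol a t x - dispersiveSymbol a t y‖ ≤ 2 := by
  refine (norm_sub_le _ _).trans_eq ?_
  rw [dispersiveSymbol_eq, dispersiveSymbol_eq, Complex.norm_exp_I_mul_ofReal,
    Complex.norm_exp_I_mul_ofReal]
  norm_num

lemma norm_dispersiveSymbol_sub_le {a t M x y : ℝ} (ha : 0 < a) (ht : 0 ≤ t) (hx : |x| ≤ M)
    (hy : |y| ≤ M) :
    ‖dispersiveSymbol a t x - dispersiveSymbol a t y‖ ≤ (2 + a) * t * M ^ (1 + a) * |x - y| := by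
  rw [dispersiveSymbol_eq, dispersiveSymbol_eq]
  refine (Complex.norm_exp_I_mul_ofReal_sub_exp_I_mul_ofReal_le _ _).trans ?_
  have hφ := abs_abs_rpow_mul_self_sub_le (by linarith : 1 < 1 + a) hx hy
  rw [show 1 + a + 1 = 2 + a by ring] at hφ
  calc |-(t * (|x| ^ (1 + a) * x)) - -(t * (|y| ^ (1 + a) * y))|
      = t * |(|x| ^ (1 + a) * x) - |y| ^ (1 + a) * y| := by
        rw [neg_sub_neg, ← mul_sub, abs_mul, abs_of_nonneg ht, abs_sub_comm]
    _ ≤ t * ((2 + a) * M ^ (1 + a) * |x - y|) := by gcongr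
    _ = (2 + a) * t * M ^ (1 + a) * |x - y| := by ring

lemma rpow_mul_add_inv_rpow_le {a b l X : ℝ} (ha : 0 ≤ a) (hb : 0 ≤ b) (hl : 0 < l)
    (hX : 0 ≤ X) :
    (l ^ (2 + a)) ^ b * (X + l⁻¹) ^ ((1 + a) * b)
      ≤ 2 ^ ((1 + a) * b) *
          ((l ^ (2 + a)) ^ (b / (2 + a)) + (l ^ (2 + a)) ^ b * X ^ ((1 + a) * b)) := by
  have hscale : (l ^ (2 + a)) ^ b * l⁻¹ ^ ((1 + a) * b) = (l ^ (2 + a)) ^ (b / (2 + a)) := by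
    rw [inv_rpow hl.le, ← rpow_neg hl.le, ← rpow_mul hl.le, ← rpow_mul hl.le, ← rpow_add hl]
    congr 1
    field_simp
    ring
  calc (l ^ (2 + a)) ^ b * (X + l⁻¹) ^ ((1 + a) * b)
      ≤ (l ^ (2 + a)) ^ b * (2 ^ ((1 + a) * b) * (X ^ ((1 + a) * b) + l⁻¹ ^ ((1 + a) * b))) := by
        gcongr
        exact add_rpow_le_two_rpow_mul_rpow_add_rpow hX (by positivity) (by positivity)
    _ = _ := by rw [← hscale]; ring

/-- for `b, a ∈ (0,1)` and `t > 0`,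
`𝒟^b(e^{−it|x|^{1+a}x})(x) ≤ c (t^{b/(2+a)} + t^b |x|^{(1+a)b})`. -/
theorem steinD_exp_symbol_bound (a b : ℝ) (ha : a ∈ Set.Ioo (0 : ℝ) 1)
    (hb : b ∈ Set.Ioo (0 : ℝ) 1) :
    ∃ c : ℝ, 0 ≤ c ∧ ∀ t : ℝ, 0 < t → ∀ x : ℝ,
      steinD b (fun y => Complex.exp (-Complex.I * t * (|y| ^ (1 + a) : ℝ) * y)) x
        ≤ c * (t ^ (b / (2 + a)) + t ^ b * |x| ^ ((1 + a) * b)) := by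
  obtain ⟨ha, -⟩ := ha
  refine ⟨√(1 / (1 - b) + 4 / b) * (2 + a) ^ b * 2 ^ ((1 + a) * b), by positivity,
    fun t ht x => ?_⟩
  obtain ⟨l, hl, rfl⟩ : ∃ l > 0, t = l ^ (2 + a) := ⟨t ^ (2 + a)⁻¹, by positivity,
    by rw [← rpow_mul ht.le, inv_mul_cancel₀ (by linarith), rpow_one]⟩
  set M := |x| + l⁻¹
  -- the Lipschitz constant of the symbol on the ball of radius `l⁻¹` around `x`
  set L := (2 + a) * l ^ (2 + a) * M ^ (1 + a)
  have hlL : l ≤ L := calc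
    l = 1 * l ^ (2 + a) * l⁻¹ ^ (1 + a) := by
      rw [one_mul, inv_rpow hl.le, ← rpow_neg hl.le, ← rpow_add hl]; norm_num
    _ ≤ (2 + a) * l ^ (2 + a) * M ^ (1 + a) := by gcongr <;> linarith [abs_nonneg x]
  have hL : 0 < L := hl.trans_le hlL
  have hball : ∀ y, |x - y| ≤ L⁻¹ → |y| ≤ M := fun y hy => by
    have hyx := abs_sub_abs_le_abs_sub y x
    rw [abs_sub_comm] at hyx
    linarith [(inv_le_inv₀ hL hl).mpr hlL]
  calc steinD b (dispersiveSymbol a (l ^ (2 + a))) x ≤ √(1 / (1 - b) + 4 / b) * L ^ b :=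
        steinD_le_of_lipschitz_near hb hL (norm_dispersiveSymbol_sub_le_two _ _ x) fun y hy =>
          norm_dispersiveSymbol_sub_le ha (by positivity) (by simp [M, hl.le]) (hball y hy)
    _ = √(1 / (1 - b) + 4 / b) * (2 + a) ^ b * ((l ^ (2 + a)) ^ b * M ^ ((1 + a) * b)) := by
        rw [mul_rpow (by positivity) (by positivity), mul_rpow (by positivity) (by positivity),
          rpow_mul (by positivity : 0 ≤ M)]
        ring
    _ ≤ _ := by
        rw [mul_assoc (√_ * _) (2 ^ _)]
        exact mul_le_mul_of_nonneg_left (rpow_mul_add_inv_rpow_le ha.le hb.1.le hl (abs_nonneg x))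
          (by positivity)
end

section
/- Let g ∈ C²(ℝ) with g(0) = 0 and g'' bounded, a ∈ (1/2,1), and χ a smooth cutoff supported in [−2,2] equal to 1 on (−1,1). Define R(ξ) = χ(ξ)|ξ|^{a−1}(g(ξ) − ξ g'(0)). Then R ∈ H¹(ℝ), with ‖R‖_{L²} + ‖R'‖_{L²} ≤ c_a ‖g''‖_{L^∞}. -/
open MeasureTheory
open scoped NNReal ENNReal

private lemma mul3_bound {x1 x2 x3 b1 b23 : ℝ} (h1 : |x1| ≤ b1) (h23 : |x2| * |x3| ≤ b23)
    (hb1 : 0 ≤ b1) : |x1 * x2 * x3| ≤ b1 * b23 := by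
  rw [abs_mul, abs_mul, mul_assoc]
  exact mul_le_mul h1 h23 (by positivity) hb1

private lemma aux_l2 {f : ℝ → ℝ} {b : ℝ} (hb : 0 ≤ b) (hf : AEStronglyMeasurable f volume)
    (hbound : ∀ᵐ ξ : ℝ, ‖f ξ‖ ≤ Set.indicator (Set.Icc (-2:ℝ) 2) (fun _ => b) ξ) :
    MemLp f 2 volume ∧ eLpNorm f 2 volume ≤ ENNReal.ofReal (2 * b) := by
  set ind : ℝ → ℝ := Set.indicator (Set.Icc (-2:ℝ) 2) (fun _ => b) with hind_def
  have hbound' : ∀ᵐ ξ : ℝ, ‖f ξ‖ ≤ ‖ind ξ‖ :=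
    hbound.mono fun ξ hξ => hξ.trans (le_abs_self _)
  have hind : MemLp ind 2 volume :=
    memLp_indicator_const 2 measurableSet_Icc b (Or.inr measure_Icc_lt_top.ne)
  refine ⟨hind.of_le hf hbound', ?_⟩
  have hvol : volume (Set.Icc (-2:ℝ) 2) = 4 := by
    rw [Real.volume_Icc]; norm_num
  calc eLpNorm f 2 volume ≤ eLpNorm ind 2 volume := eLpNorm_mono_ae hbound'
    _ = ‖b‖ₑ * volume (Set.Icc (-2:ℝ) 2) ^ (1 / (2:ℝ≥0∞).toReal) :=
        eLpNorm_indicator_const measurableSet_Icc two_ne_zero ENNReal.ofNat_ne_top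
    _ = ENNReal.ofReal b * (4:ℝ≥0∞) ^ (1/(2:ℝ)) := by
        rw [hvol, ← ofReal_norm, Real.norm_eq_abs, abs_of_nonneg hb]
        norm_num
    _ = ENNReal.ofReal b * 2 := by
        congr 1
        rw [show (4:ℝ≥0∞) = (2:ℝ≥0∞)^(2:ℕ) by norm_num, ← ENNReal.rpow_natCast,
          ← ENNReal.rpow_mul]
        norm_num
    _ = ENNReal.ofReal (2 * b) := by
        rw [show (2:ℝ≥0∞) = ENNReal.ofReal 2 by norm_num, ← ENNReal.ofReal_mul hb, mul_comm]

/-- for `a ∈ (1/2,1)`, `χ` a cutoff, and `g ∈ C²` with `g(0)=0` and `g''`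
bounded, the remainder `R(ξ) = χ(ξ)|ξ|^{a−1}(g(ξ) − ξ g'(0))` lies in `H¹(ℝ)` with
`‖R‖₂ + ‖R'‖₂ ≤ c_a ‖g''‖_∞`. -/
theorem taylor_remainder_H1 (a : ℝ) (ha : a ∈ Set.Ioo (1 / 2 : ℝ) 1)
    (χ : ℝ → ℝ) (hχ : ContDiff ℝ (⊤ : ℕ∞) χ) (hsupp : Function.support χ ⊆ Set.Icc (-2 : ℝ) 2)
    (hone : ∀ ξ ∈ Set.Ioo (-1 : ℝ) 1, χ ξ = 1) :
    ∃ c : ℝ, 0 ≤ c ∧ ∀ g : ℝ → ℝ, ContDiff ℝ 2 g → g 0 = 0 →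
      ∀ M : ℝ, (∀ x, |deriv (deriv g) x| ≤ M) →
      MemLp (fun ξ => χ ξ * |ξ| ^ (a - 1) * (g ξ - ξ * deriv g 0)) 2 volume ∧
      MemLp (deriv fun ξ => χ ξ * |ξ| ^ (a - 1) * (g ξ - ξ * deriv g 0)) 2 volume ∧
      eLpNorm (fun ξ => χ ξ * |ξ| ^ (a - 1) * (g ξ - ξ * deriv g 0)) 2 volume
        + eLpNorm (deriv fun ξ => χ ξ * |ξ| ^ (a - 1) * (g ξ - ξ * deriv g 0)) 2 volume
        ≤ ENNReal.ofReal (c * M) := by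
  obtain ⟨ha1, ha2⟩ := ha
  -- bounds for χ and deriv χ
  obtain ⟨C0, hC0⟩ := (isCompact_Icc (a := (-2:ℝ)) (b := 2)).exists_bound_of_continuousOn
    hχ.continuous.continuousOn
  obtain ⟨C1, hC1⟩ := (isCompact_Icc (a := (-2:ℝ)) (b := 2)).exists_bound_of_continuousOn
    (hχ.continuous_deriv (by simp)).continuousOn
  set Cχ := max C0 C1 with hCχ_def
  have hCχ0 : 0 ≤ Cχ :=
    le_trans (norm_nonneg (χ 0)) ((hC0 0 (by norm_num)).trans (le_max_left _ _))
  have hχb : ∀ x ∈ Set.Icc (-2:ℝ) 2, |χ x| ≤ Cχ :=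
    fun x hx => (hC0 x hx).trans (le_max_left _ _)
  have hχ'b : ∀ x ∈ Set.Icc (-2:ℝ) 2, |deriv χ x| ≤ Cχ :=
    fun x hx => (hC1 x hx).trans (le_max_right _ _)
  refine ⟨48 * Cχ, by positivity, ?_⟩
  intro g hg hg0 M hM
  have hM0 : (0:ℝ) ≤ M := (abs_nonneg _).trans (hM 0)
  have hdg : Differentiable ℝ g := hg.differentiable (by norm_num)
  have hdg' : Differentiable ℝ (deriv g) := by
    have h2 := (contDiff_succ_iff_deriv (n := 1)).mp (by exact_mod_cast hg)
    exact h2.2.2.differentiable one_ne_zero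
  set d0 := deriv g 0 with hd0_def
  -- Taylor estimates
  have hhd : ∀ x : ℝ, HasDerivAt (fun y => g y - y * d0) (deriv g x - d0) x :=
    fun x => (hdg x).hasDerivAt.sub (hasDerivAt_mul_const d0)
  have hlip : ∀ x : ℝ, |deriv g x - d0| ≤ M * |x| := by
    intro x
    have := Convex.norm_image_sub_le_of_norm_deriv_le (f := deriv g) (s := Set.univ)
      (fun y _ => hdg' y) (fun y _ => (hM y).trans_eq' (Real.norm_eq_abs _))
      convex_univ (Set.mem_univ 0) (Set.mem_univ x)
    simpa [Real.norm_eq_abs] using this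
  have hhb : ∀ ξ : ℝ, |g ξ - ξ * d0| ≤ M * |ξ| * |ξ| := by
    intro ξ
    have hmem0 : (0:ℝ) ∈ Set.Icc (-|ξ|) |ξ| := by
      constructor
      · linarith [abs_nonneg ξ]
      · exact abs_nonneg ξ
    have hmemξ : ξ ∈ Set.Icc (-|ξ|) |ξ| := ⟨neg_abs_le ξ, le_abs_self ξ⟩
    have hb : ∀ y ∈ Set.Icc (-|ξ|) |ξ|, ‖deriv (fun y => g y - y * d0) y‖ ≤ M * |ξ| := by
      intro y hy
      rw [(hhd y).deriv, Real.norm_eq_abs]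
      calc |deriv g y - d0| ≤ M * |y| := hlip y
        _ ≤ M * |ξ| := by
            have : |y| ≤ |ξ| := abs_le.2 ⟨hy.1, hy.2⟩
            exact mul_le_mul_of_nonneg_left this hM0
    have := Convex.norm_image_sub_le_of_norm_deriv_le (f := fun y => g y - y * d0)
      (fun y _ => (hhd y).differentiableAt) hb (convex_Icc _ _) hmem0 hmemξ
    simpa [hg0, Real.norm_eq_abs, mul_assoc] using this
  -- power bound
  have hpow : ∀ ξ : ℝ, ξ ≠ 0 → ξ ∈ Set.Icc (-2:ℝ) 2 → ∀ p : ℝ, 0 ≤ p → p ≤ 2 → |ξ| ^ p ≤ 4 := by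
    intro ξ hξ0 hξm p hp0 hp2
    have ht2 : |ξ| ≤ 2 := abs_le.2 ⟨hξm.1, hξm.2⟩
    calc |ξ| ^ p ≤ 2 ^ p := Real.rpow_le_rpow (abs_nonneg ξ) ht2 hp0
      _ ≤ (2:ℝ) ^ (2:ℝ) := Real.rpow_le_rpow_of_exponent_le one_le_two hp2
      _ = 4 := by
          rw [show (2:ℝ) = ((2:ℕ):ℝ) by norm_num, Real.rpow_natCast]
          norm_num
  -- the three key bounds at nonzero points of the support
  have key : ∀ ξ : ℝ, ξ ≠ 0 → ξ ∈ Set.Icc (-2:ℝ) 2 →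
      |ξ| ^ (a-1) * |g ξ - ξ * d0| ≤ 4 * M ∧
      |ξ| ^ (a-1-1) * |g ξ - ξ * d0| ≤ 4 * M ∧
      |ξ| ^ (a-1) * |deriv g ξ - d0| ≤ 4 * M := by
    intro ξ hξ0 hξm
    have habs : (0:ℝ) < |ξ| := abs_pos.2 hξ0
    have e1 : |ξ| ^ (a-1) * (M * |ξ| * |ξ|) = M * |ξ| ^ (a+1) := by
      rw [show a + 1 = (a-1) + 1 + 1 by ring, Real.rpow_add habs, Real.rpow_add habs,
        Real.rpow_one]
      ring
    have e2 : |ξ| ^ (a-1-1) * (M * |ξ| * |ξ|) = M * |ξ| ^ a := by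
      rw [show a = (a-1-1) + 1 + 1 by ring, Real.rpow_add habs, Real.rpow_add habs,
        Real.rpow_one]
      ring
    have e3 : |ξ| ^ (a-1) * (M * |ξ|) = M * |ξ| ^ a := by
      rw [show a = (a-1) + 1 by ring, Real.rpow_add habs, Real.rpow_one]
      ring
    have p1 : |ξ| ^ (a+1) ≤ 4 := hpow ξ hξ0 hξm _ (by linarith) (by linarith)
    have p2 : |ξ| ^ a ≤ 4 := hpow ξ hξ0 hξm _ (by linarith) (by linarith)
    refine ⟨?_, ?_, ?_⟩
    · calc |ξ| ^ (a-1) * |g ξ - ξ * d0| ≤ |ξ| ^ (a-1) * (M * |ξ| * |ξ|) :=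
            mul_le_mul_of_nonneg_left (hhb ξ) (Real.rpow_nonneg (abs_nonneg ξ) _)
        _ = M * |ξ| ^ (a+1) := e1
        _ ≤ M * 4 := mul_le_mul_of_nonneg_left p1 hM0
        _ = 4 * M := by ring
    · calc |ξ| ^ (a-1-1) * |g ξ - ξ * d0| ≤ |ξ| ^ (a-1-1) * (M * |ξ| * |ξ|) :=
            mul_le_mul_of_nonneg_left (hhb ξ) (Real.rpow_nonneg (abs_nonneg ξ) _)
        _ = M * |ξ| ^ a := e2
        _ ≤ M * 4 := mul_le_mul_of_nonneg_left p2 hM0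
        _ = 4 * M := by ring
    · calc |ξ| ^ (a-1) * |deriv g ξ - d0| ≤ |ξ| ^ (a-1) * (M * |ξ|) :=
            mul_le_mul_of_nonneg_left (hlip ξ) (Real.rpow_nonneg (abs_nonneg ξ) _)
        _ = M * |ξ| ^ a := e3
        _ ≤ M * 4 := mul_le_mul_of_nonneg_left p2 hM0
        _ = 4 * M := by ring
  set b : ℝ := 12 * Cχ * M with hb_def
  have hb0 : 0 ≤ b := by positivity
  -- measurability of R
  have hmeasR : Measurable (fun ξ : ℝ => χ ξ * |ξ| ^ (a - 1) * (g ξ - ξ * d0)) := by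
    have h1 : Measurable χ := hχ.continuous.measurable
    have h2 : Measurable (fun ξ : ℝ => |ξ| ^ (a-1)) := by measurability
    exact (h1.mul h2).mul ((hg.continuous.measurable).sub (measurable_id.mul_const _))
  -- pointwise bound on R
  have hRbound : ∀ ξ : ℝ, ‖χ ξ * |ξ| ^ (a - 1) * (g ξ - ξ * d0)‖ ≤
      Set.indicator (Set.Icc (-2:ℝ) 2) (fun _ => b) ξ := by
    intro ξ
    rw [Real.norm_eq_abs]
    by_cases hmem : ξ ∈ Set.Icc (-2:ℝ) 2
    · rw [Set.indicator_of_mem hmem]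
      by_cases hξ0 : ξ = 0
      · simp [hξ0, hg0, hb0]
      · have hk := (key ξ hξ0 hmem).1
        have : |χ ξ * |ξ| ^ (a - 1) * (g ξ - ξ * d0)| ≤ Cχ * (4 * M) := by
          refine mul3_bound (hχb ξ hmem) ?_ hCχ0
          rwa [abs_of_nonneg (Real.rpow_nonneg (abs_nonneg ξ) _)]
        calc |χ ξ * |ξ| ^ (a - 1) * (g ξ - ξ * d0)| ≤ Cχ * (4 * M) := this
          _ ≤ b := by rw [hb_def]; nlinarith
    · rw [Set.indicator_of_notMem hmem]
      have hχ0 : χ ξ = 0 := Function.notMem_support.1 (fun hs => hmem (hsupp hs))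
      simp [hχ0]
  -- a.e. bound on deriv R
  have h0 : ∀ᵐ ξ : ℝ, ξ ≠ (0:ℝ) := by
    have hs : volume ({(0:ℝ)} : Set ℝ) = 0 := Real.volume_singleton
    have := compl_mem_ae_iff.2 hs
    exact Filter.eventually_of_mem this (fun x hx => hx)
  have hDbound : ∀ᵐ ξ : ℝ, ‖deriv (fun x => χ x * |x| ^ (a - 1) * (g x - x * d0)) ξ‖ ≤
      Set.indicator (Set.Icc (-2:ℝ) 2) (fun _ => b) ξ := by
    filter_upwards [h0] with ξ hξ0
    by_cases hmem : ξ ∈ Set.Icc (-2:ℝ) 2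
    · -- compute the derivative
      have habs : (0:ℝ) < |ξ| := abs_pos.2 hξ0
      have hφ : HasDerivAt (fun x : ℝ => |x| ^ (a-1))
          ((a-1) * |ξ| ^ (a-1-1) * (SignType.sign ξ : ℝ)) ξ :=
        (Real.hasDerivAt_rpow_const (p := a-1) (Or.inl habs.ne')).comp ξ (hasDerivAt_abs hξ0)
      have hRd : HasDerivAt (fun x => χ x * |x| ^ (a - 1) * (g x - x * d0))
          ((deriv χ ξ * |ξ| ^ (a-1) + χ ξ * ((a-1) * |ξ| ^ (a-1-1) * (SignType.sign ξ : ℝ)))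
            * (g ξ - ξ * d0) + (χ ξ * |ξ| ^ (a-1)) * (deriv g ξ - d0)) ξ :=
        (((hχ.differentiable (by simp) ξ).hasDerivAt.mul hφ).mul (hhd ξ))
      rw [hRd.deriv, Set.indicator_of_mem hmem]
      obtain ⟨k1, k2, k3⟩ := key ξ hξ0 hmem
      set s : ℝ := (SignType.sign ξ : ℝ) with hs_def
      have hs1 : |s| ≤ 1 := by
        rw [hs_def]; cases h : SignType.sign ξ <;> simp [h]
      have t1 : |deriv χ ξ * |ξ| ^ (a-1) * (g ξ - ξ * d0)| ≤ Cχ * (4 * M) := by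
        refine mul3_bound (hχ'b ξ hmem) ?_ hCχ0
        rwa [abs_of_nonneg (Real.rpow_nonneg (abs_nonneg ξ) _)]
      have t2 : |χ ξ * ((a-1) * |ξ| ^ (a-1-1) * s) * (g ξ - ξ * d0)| ≤ Cχ * (4 * M) := by
        refine mul3_bound (hχb ξ hmem) ?_ hCχ0
        have hx2 : |(a-1) * |ξ| ^ (a-1-1) * s| ≤ |ξ| ^ (a-1-1) := by
          rw [abs_mul, abs_mul, abs_of_nonneg (Real.rpow_nonneg (abs_nonneg ξ) _)]
          have ha1' : |a-1| ≤ 1 := by rw [abs_le]; constructor <;> linarith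
          have hrn : (0:ℝ) ≤ |ξ| ^ (a-1-1) := Real.rpow_nonneg (abs_nonneg ξ) _
          calc |a-1| * |ξ| ^ (a-1-1) * |s| ≤ 1 * |ξ| ^ (a-1-1) * 1 :=
                mul_le_mul (mul_le_mul ha1' le_rfl hrn zero_le_one) hs1 (abs_nonneg s)
                  (by positivity)
            _ = |ξ| ^ (a-1-1) := by ring
        calc |(a-1) * |ξ| ^ (a-1-1) * s| * |g ξ - ξ * d0|
            ≤ |ξ| ^ (a-1-1) * |g ξ - ξ * d0| :=
              mul_le_mul_of_nonneg_right hx2 (abs_nonneg _)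
          _ ≤ 4 * M := k2
      have t3 : |χ ξ * |ξ| ^ (a-1) * (deriv g ξ - d0)| ≤ Cχ * (4 * M) := by
        refine mul3_bound (hχb ξ hmem) ?_ hCχ0
        rwa [abs_of_nonneg (Real.rpow_nonneg (abs_nonneg ξ) _)]
      have hsplit : (deriv χ ξ * |ξ| ^ (a-1) + χ ξ * ((a-1) * |ξ| ^ (a-1-1) * s))
            * (g ξ - ξ * d0) + (χ ξ * |ξ| ^ (a-1)) * (deriv g ξ - d0)
          = deriv χ ξ * |ξ| ^ (a-1) * (g ξ - ξ * d0)
            + χ ξ * ((a-1) * |ξ| ^ (a-1-1) * s) * (g ξ - ξ * d0)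
            + χ ξ * |ξ| ^ (a-1) * (deriv g ξ - d0) := by ring
      rw [Real.norm_eq_abs, hsplit]
      calc |deriv χ ξ * |ξ| ^ (a-1) * (g ξ - ξ * d0)
            + χ ξ * ((a-1) * |ξ| ^ (a-1-1) * s) * (g ξ - ξ * d0)
            + χ ξ * |ξ| ^ (a-1) * (deriv g ξ - d0)|
          ≤ |deriv χ ξ * |ξ| ^ (a-1) * (g ξ - ξ * d0)
              + χ ξ * ((a-1) * |ξ| ^ (a-1-1) * s) * (g ξ - ξ * d0)|
            + |χ ξ * |ξ| ^ (a-1) * (deriv g ξ - d0)| := abs_add_le _ _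
        _ ≤ (|deriv χ ξ * |ξ| ^ (a-1) * (g ξ - ξ * d0)|
              + |χ ξ * ((a-1) * |ξ| ^ (a-1-1) * s) * (g ξ - ξ * d0)|)
            + |χ ξ * |ξ| ^ (a-1) * (deriv g ξ - d0)| :=
            add_le_add_left (abs_add_le _ _) _
        _ ≤ Cχ * (4 * M) + Cχ * (4 * M) + Cχ * (4 * M) :=
            add_le_add (add_le_add t1 t2) t3
        _ = b := by rw [hb_def]; ring
    · -- outside the support: derivative vanishes
      have hopen : IsOpen ((Set.Icc (-2:ℝ) 2)ᶜ) := isClosed_Icc.isOpen_compl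
      have hev : (fun x => χ x * |x| ^ (a - 1) * (g x - x * d0)) =ᶠ[nhds ξ]
          (fun _ => (0:ℝ)) := by
        filter_upwards [hopen.mem_nhds hmem] with y hy
        have : χ y = 0 := Function.notMem_support.1 (fun hs => hy (hsupp hs))
        simp [this]
      rw [hev.deriv_eq, deriv_const, Set.indicator_of_notMem hmem]
      simp
  -- conclude
  obtain ⟨hmem1, hnorm1⟩ := aux_l2 hb0 hmeasR.aestronglyMeasurable
    (Filter.Eventually.of_forall hRbound)
  obtain ⟨hmem2, hnorm2⟩ := aux_l2 hb0
    (measurable_deriv _).aestronglyMeasurable hDbound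
  refine ⟨hmem1, hmem2, ?_⟩
  calc eLpNorm (fun ξ => χ ξ * |ξ| ^ (a - 1) * (g ξ - ξ * d0)) 2 volume
        + eLpNorm (deriv fun ξ => χ ξ * |ξ| ^ (a - 1) * (g ξ - ξ * d0)) 2 volume
      ≤ ENNReal.ofReal (2 * b) + ENNReal.ofReal (2 * b) := add_le_add hnorm1 hnorm2
    _ = ENNReal.ofReal (2 * b + 2 * b) := (ENNReal.ofReal_add (by positivity) (by positivity)).symm
    _ = ENNReal.ofReal (48 * Cχ * M) := by rw [hb_def]; ring_nf
    _ = ENNReal.ofReal (48 * Cχ * M) := rfl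
end
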